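/- Let D₁ be a nonnegative self-adjoint operator on L²(M) and let F be bounded Borel on [0,∞) with sup_λ |(1+λ)^γ F(λ)| < ∞ for some γ > n/2 + 1. Suppose ‖(1+t²D₁²)^{-σ}‖_{L¹→L²} ≤ C t^{-n/2}(1+t)^{n/2-ρ} for all σ ≥ (γ-1)/2 and t>0. Then ‖t D₁ F(t D₁)‖_{L¹→L²} ≤ C' t^{-n/2}(1+t)^{n/2-ρ} for all t > 0. -/

import Mathlib

open MeasureTheory Real

/-!
Factor `tD₁ F(tD₁) = G(tD₁) (1 + t²D₁²)^{-σ}` with `σ = (γ-1)/2` and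
`G(s) = (1 + s²)^σ s F(s)`. Since `(1 + s²)^σ s ≤ (1 + s)^γ`, the decay of `F` makes `G`
bounded on `[0, ∞)`, so `G(tD₁)` is bounded on `L²` uniformly in `t`, and the `L¹ → L²`
bound of the resolvent power passes to the product.
-/

/-- `OpBound12 μ T K` expresses the `L¹ → L²` operator norm bound `‖T‖_{1;2} ≤ K`. -/
def OpBound12 {X : Type*} [MeasurableSpace X] (μ : Measure X)
    (T : Lp ℂ 2 μ →L[ℂ] Lp ℂ 2 μ) (K : ℝ) : Prop :=
  ∀ (f : X → ℂ) (_ : Integrable f μ) (hf2 : MemLp f 2 μ),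
    ‖T (hf2.toLp f)‖ ≤ K * ∫ x, ‖f x‖ ∂μ

namespace OpBound12

variable {X : Type*} [MeasurableSpace X] {μ : Measure X}
  {T : Lp ℂ 2 μ →L[ℂ] Lp ℂ 2 μ} {K : ℝ}

theorem mono (hT : OpBound12 μ T K) {K' : ℝ} (hK : K ≤ K') : OpBound12 μ T K' :=
  fun f hf1 hf2 => (hT f hf1 hf2).trans <|
    mul_le_mul_of_nonneg_right hK (integral_nonneg fun _ => norm_nonneg _)

theorem comp_left (hT : OpBound12 μ T K) {S : Lp ℂ 2 μ →L[ℂ] Lp ℂ 2 μ} {M : ℝ}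
    (hS : ‖S‖ ≤ M) : OpBound12 μ (S.comp T) (M * K) := by
  intro f hf1 hf2
  calc ‖S (T (hf2.toLp f))‖ ≤ M * ‖T (hf2.toLp f)‖ := S.le_of_opNorm_le hS _
    _ ≤ M * (K * ∫ x, ‖f x‖ ∂μ) :=
        mul_le_mul_of_nonneg_left (hT f hf1 hf2) ((norm_nonneg S).trans hS)
    _ = M * K * ∫ x, ‖f x‖ ∂μ := (mul_assoc _ _ _).symm

theorem of_mul_symbol {Φ : (ℝ → ℂ) → (Lp ℂ 2 μ →L[ℂ] Lp ℂ 2 μ)}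
    (hmul : ∀ F G : ℝ → ℂ, Φ (fun l => F l * G l) = (Φ F).comp (Φ G))
    (hnorm : ∀ (G : ℝ → ℂ) (K : ℝ), 0 ≤ K → (∀ l : ℝ, 0 ≤ l → ‖G l‖ ≤ K) → ‖Φ G‖ ≤ K)
    {G R : ℝ → ℂ} {M : ℝ} (hM : 0 ≤ M) (hG : ∀ l, 0 ≤ l → ‖G l‖ ≤ M)
    (hR : OpBound12 μ (Φ R) K) : OpBound12 μ (Φ fun l => G l * R l) (M * K) := by
  rw [hmul]
  exact hR.comp_left (hnorm G M hM hG)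

end OpBound12

theorem one_add_sq_rpow_mul_le_one_add_rpow {γ s : ℝ} (hγ : 1 ≤ γ) (hs : 0 ≤ s) :
    (1 + s ^ 2) ^ ((γ - 1) / 2) * s ≤ (1 + s) ^ γ := by
  have hσ : 0 ≤ (γ - 1) / 2 := by linarith
  calc (1 + s ^ 2) ^ ((γ - 1) / 2) * s ≤ ((1 + s) ^ 2) ^ ((γ - 1) / 2) * (1 + s) := by
        gcongr
        · nlinarith
        · linarith
    _ = (1 + s) ^ γ := by
        rw [← rpow_natCast, ← rpow_mul (by positivity), ← rpow_add_one (by positivity)]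
        ring_nf

theorem rpow_mul_norm_le_of_decay {F : ℝ → ℂ} {γ K : ℝ} (hγ : 1 ≤ γ)
    (hF : ∀ l : ℝ, 0 < l → (1 + l) ^ γ * ‖F l‖ ≤ K) {s : ℝ} (hs : 0 ≤ s) :
    (1 + s ^ 2) ^ ((γ - 1) / 2) * s * ‖F s‖ ≤ max K 0 := by
  rcases hs.eq_or_lt with rfl | hs
  · simp
  calc (1 + s ^ 2) ^ ((γ - 1) / 2) * s * ‖F s‖ ≤ (1 + s) ^ γ * ‖F s‖ := by
        gcongr
        exact one_add_sq_rpow_mul_le_one_add_rpow hγ hs.le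
    _ ≤ K := hF s hs
    _ ≤ max K 0 := le_max_left _ _

theorem ofReal_mul_eq_rpow_mul_mul_rpow_neg (F : ℝ → ℂ) (σ x : ℝ) :
    ((x : ℝ) : ℂ) * F x
      = (((1 + x ^ 2) ^ σ * x : ℝ) : ℂ) * F x * (((1 + x ^ 2) ^ (-σ) : ℝ) : ℂ) := by
  have hne : (((1 + x ^ 2) ^ σ : ℝ) : ℂ) ≠ 0 :=
    Complex.ofReal_ne_zero.mpr (rpow_pos_of_pos (by positivity) σ).ne'
  rw [rpow_neg (by positivity)]
  push_cast
  field_simp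

theorem tD_F_tD_bound_general
    {X : Type*} [MeasurableSpace X] (μ : Measure X)
    (n ρ C γ : ℝ) (hn : 0 < n) (hγ : n/2 + 1 < γ)
    (Φ : (ℝ → ℂ) → (Lp ℂ 2 μ →L[ℂ] Lp ℂ 2 μ))
    (hmul : ∀ F G : ℝ → ℂ, Φ (fun l => F l * G l) = (Φ F).comp (Φ G))
    (hnorm : ∀ (G : ℝ → ℂ) (K : ℝ), 0 ≤ K → (∀ l : ℝ, 0 ≤ l → ‖G l‖ ≤ K) → ‖Φ G‖ ≤ K)
    (F : ℝ → ℂ)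
    (hFdecay : ∃ K : ℝ, ∀ l : ℝ, 0 < l → (1 + l) ^ γ * ‖F l‖ ≤ K)
    (hres : ∀ σ : ℝ, (γ - 1)/2 ≤ σ → ∀ t : ℝ, 0 < t →
      OpBound12 μ (Φ (fun l => (((1 + t ^ 2 * l ^ 2) ^ (-σ) : ℝ) : ℂ)))
        (C * t ^ (-(n/2)) * (1 + t) ^ (n/2 - ρ))) :
    ∃ C' > 0, ∀ t : ℝ, 0 < t →
      OpBound12 μ (Φ (fun l => ((t * l : ℝ) : ℂ) * F (t * l)))
        (C' * t ^ (-(n/2)) * (1 + t) ^ (n/2 - ρ)) := by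
  obtain ⟨K, hK⟩ := hFdecay
  have hγ1 : 1 ≤ γ := by linarith
  refine ⟨max (max K 0 * C) 1, by positivity, fun t ht => ?_⟩
  let G : ℝ → ℂ := fun l =>
    (((1 + (t * l) ^ 2) ^ ((γ - 1) / 2) * (t * l) : ℝ) : ℂ) * F (t * l)
  have hG : ∀ l, 0 ≤ l → ‖G l‖ ≤ max K 0 := fun l hl => by
    have hx : 0 ≤ t * l := mul_nonneg ht.le hl
    rw [norm_mul, Complex.norm_real, norm_of_nonneg (by positivity)]
    exact rpow_mul_norm_le_of_decay hγ1 hK hx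
  have hfactor : (fun l => ((t * l : ℝ) : ℂ) * F (t * l))
      = fun l => G l * (((1 + t ^ 2 * l ^ 2) ^ (-((γ - 1) / 2)) : ℝ) : ℂ) := by
    funext l
    rw [ofReal_mul_eq_rpow_mul_mul_rpow_neg F ((γ - 1) / 2) (t * l)]
    simp only [G, mul_pow]
  rw [hfactor]
  refine ((OpBound12.of_mul_symbol hmul hnorm (le_max_right K 0) hG
    (hres _ le_rfl t ht)).mono ?_)
  calc max K 0 * (C * t ^ (-(n/2)) * (1 + t) ^ (n/2 - ρ))
      = max K 0 * C * (t ^ (-(n/2)) * (1 + t) ^ (n/2 - ρ)) := by ring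
    _ ≤ max (max K 0 * C) 1 * (t ^ (-(n/2)) * (1 + t) ^ (n/2 - ρ)) := by gcongr; simp
    _ = _ := by ring

/-- Let `D₁` be a nonnegative self-adjoint operator on `L²(M)`, encoded by its Borel
functional calculus `Φ` (multiplicative, with the sup-norm bound over the nonnegative
spectral parameters).  If `F` is bounded Borel with `sup_λ (1+λ)^γ |F(λ)| < ∞` for some
`γ > n/2 + 1`, and `‖(1+t²D₁²)^{-σ}‖_{1;2} ≤ C t^{-n/2}(1+t)^{n/2-ρ}` for all
`σ ≥ (γ-1)/2` and `t > 0`, then `‖tD₁F(tD₁)‖_{1;2} ≤ C' t^{-n/2}(1+t)^{n/2-ρ}`. -/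
theorem tD_F_tD_bound
    {X : Type*} [MeasurableSpace X] (μ : Measure X) [SigmaFinite μ]
    (n ρ C γ : ℝ) (hn : 0 < n) (hρ : 0 ≤ ρ) (hC : 0 < C) (hγ : n/2 + 1 < γ)
    (Φ : (ℝ → ℂ) → (Lp ℂ 2 μ →L[ℂ] Lp ℂ 2 μ))
    (hmul : ∀ F G : ℝ → ℂ, Φ (fun l => F l * G l) = (Φ F).comp (Φ G))
    (hnorm : ∀ (G : ℝ → ℂ) (K : ℝ), 0 ≤ K → (∀ l : ℝ, 0 ≤ l → ‖G l‖ ≤ K) → ‖Φ G‖ ≤ K)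
    (F : ℝ → ℂ) (hFmeas : Measurable F) (hFbdd : ∃ B : ℝ, ∀ l : ℝ, ‖F l‖ ≤ B)
    (hFdecay : ∃ K : ℝ, ∀ l : ℝ, 0 < l → (1 + l) ^ γ * ‖F l‖ ≤ K)
    (hres : ∀ σ : ℝ, (γ - 1)/2 ≤ σ → ∀ t : ℝ, 0 < t →
      OpBound12 μ (Φ (fun l => (((1 + t ^ 2 * l ^ 2) ^ (-σ) : ℝ) : ℂ)))
        (C * t ^ (-(n/2)) * (1 + t) ^ (n/2 - ρ))) :
    ∃ C' > 0, ∀ t : ℝ, 0 < t →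
      OpBound12 μ (Φ (fun l => ((t * l : ℝ) : ℂ) * F (t * l)))
        (C' * t ^ (-(n/2)) * (1 + t) ^ (n/2 - ρ)) :=
  tD_F_tD_bound_general μ n ρ C γ hn hγ Φ hmul hnorm F hFdecay hres
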